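/- arXiv:2106.03795 — 2 statements merged into one kernel-verified Lean document; each statement's English description precedes it below -/
import Mathlib

section
/- Let f_w be an L-layer ReLU network with ‖x‖ ≤ B, suppose ‖w'_l − w_l‖ ≤ υ ≤ R/√L for all l and ‖w‖ ≤ R (where w is the concatenation of all vectorized layers). Then ‖f_{w'}(x) − f_w(x)‖ ≤ B·L·(2R/√L)^{L−1}·υ. -/
open Finset

/-- Frobenius norm of a real matrix. -/
noncomputable def frob {n m : ℕ} (M : Matrix (Fin n) (Fin m) ℝ) : ℝ :=
  Real.sqrt (∑ i, ∑ j, (M i j) ^ 2)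

/-- Output of the first `l` layers of a fully connected ReLU network:
`f⁰ = x`, `f¹ = W₀ x`, `f^{l+1} = W_l φ(f^l)` where `φ` is the ReLU. -/
noncomputable def layerOut (h : ℕ → ℕ) (W : ∀ l : ℕ, Matrix (Fin (h (l + 1))) (Fin (h l)) ℝ) :
    (l : ℕ) → EuclideanSpace ℝ (Fin (h 0)) → EuclideanSpace ℝ (Fin (h l))
  | 0, x => x
  | 1, x => WithLp.toLp 2 ((W 0).mulVec x)
  | (l + 2), x => WithLp.toLp 2 ((W (l + 1)).mulVec (fun i => max (layerOut h W (l + 1) x i) 0))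

/-!
Write `c_l = ‖W_l‖_F` and `d_l = ‖W'_l - W_l‖_F`. The ReLU is 1-Lipschitz and fixes `0`, so one
layer gives `‖f'_{l+1} - f_{l+1}‖ ≤ (c_l + d_l) ‖f'_l - f_l‖ + d_l ‖f_l‖`, and by induction
`‖f'_L - f_L‖ ≤ (∏ (c_l + d_l) - ∏ c_l) ‖x‖ ≤ (∏ (c_l + υ) - ∏ c_l) ‖x‖`. Telescoping bounds this
difference of products by `υ ∑_k ∏_{j ≠ k} (c_j + υ)`, and the top case of Maclaurin's inequality,
`∑_k ∏_{j ≠ k} b_j ≤ L (mean b)^(L-1)`, finishes the proof since by Cauchy–Schwarz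
`mean (c + υ) ≤ R/√L + υ ≤ 2R/√L`. Maclaurin's inequality and AM-GM are proved together by
induction on the number of terms: adding a term `u` to `n` terms of mean `m` moves the mean to
`x = (n m + u)/(n + 1)`, and the step is the tangent-line inequality for `y ↦ y ^ n` at `m`,
evaluated at `x`.
-/

theorem sum_prod_erase_insert {ι R : Type*} [DecidableEq ι] [CommSemiring R] {f : ι → R} {a : ι}
    {s : Finset ι} (ha : a ∉ s) :
    ∑ k ∈ insert a s, ∏ j ∈ (insert a s).erase k, f j =
      ∏ j ∈ s, f j + f a * ∑ k ∈ s, ∏ j ∈ s.erase k, f j := by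
  rw [sum_insert ha, erase_insert ha, mul_sum]
  congr 1
  refine sum_congr rfl fun k hk => ?_
  rw [erase_insert_of_ne (ne_of_mem_of_not_mem hk ha).symm,
    prod_insert fun h => ha (mem_of_mem_erase h)]

theorem pow_add_mul_sub_le_pow {K : Type*} [Field K] [LinearOrder K] [IsStrictOrderedRing K]
    {c x : K} (hc : 0 ≤ c) (hx : 0 ≤ x) (n : ℕ) :
    c ^ n + n * c ^ (n - 1) * (x - c) ≤ x ^ n := by
  rcases hc.eq_or_lt with rfl | hc
  · rcases n with _ | _ | n <;> simp
    positivity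
  · have h := one_add_mul_sub_le_pow (by linarith [div_nonneg hx hc.le] : (-1 : K) ≤ x / c) n
    calc c ^ n + n * c ^ (n - 1) * (x - c) = c ^ n * (1 + n * (x / c - 1)) := by
          rcases n with _ | n
          · simp
          · rw [Nat.add_sub_cancel]
            field_simp
            ring
      _ ≤ c ^ n * (x / c) ^ n := by gcongr
      _ = x ^ n := by rw [div_pow, mul_div_cancel₀ _ (pow_ne_zero _ hc.ne')]

theorem card_mul_mean {ι K : Type*} [Field K] [CharZero K] (s : Finset ι) (f : ι → K) :
    #s * ((∑ i ∈ s, f i) / #s) = ∑ i ∈ s, f i := by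
  rcases s.eq_empty_or_nonempty with rfl | hs
  · simp
  · exact mul_div_cancel₀ _ (Nat.cast_ne_zero.2 hs.card_pos.ne')

section Maclaurin

variable {ι : Type*} [DecidableEq ι]

theorem prod_le_mean_pow (s : Finset ι) {b : ι → ℝ} (hb : ∀ i ∈ s, 0 ≤ b i) :
    ∏ i ∈ s, b i ≤ ((∑ i ∈ s, b i) / #s) ^ #s := by
  induction s using Finset.induction_on with
  | empty => simp
  | insert a s ha ih =>
    have hbs : ∀ i ∈ s, 0 ≤ b i := fun i hi => hb i (mem_insert_of_mem hi)
    set m := (∑ i ∈ s, b i) / #s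
    have hm : 0 ≤ m := div_nonneg (sum_nonneg hbs) (Nat.cast_nonneg _)
    rw [prod_insert ha, sum_insert ha, card_insert_of_notMem ha, ← card_mul_mean s b]
    have htangent := pow_add_mul_sub_le_pow hm (x := (b a + #s * m) / ↑(#s + 1))
      (by have := hb a (mem_insert_self a s); positivity) (#s + 1)
    calc b a * ∏ i ∈ s, b i ≤ b a * m ^ #s := by gcongr; exacts [hb a (mem_insert_self a s), ih hbs]
      _ = m ^ (#s + 1) + (#s + 1 : ℕ) * m ^ (#s + 1 - 1) * ((b a + #s * m) / ↑(#s + 1) - m) := by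
        push_cast
        field_simp
        ring
      _ ≤ _ := htangent

theorem sum_prod_erase_le_card_mul_mean_pow (s : Finset ι) {b : ι → ℝ} (hb : ∀ i ∈ s, 0 ≤ b i) :
    ∑ k ∈ s, ∏ j ∈ s.erase k, b j ≤ #s * ((∑ i ∈ s, b i) / #s) ^ (#s - 1) := by
  induction s using Finset.induction_on with
  | empty => simp
  | insert a s ha ih =>
    have hbs : ∀ i ∈ s, 0 ≤ b i := fun i hi => hb i (mem_insert_of_mem hi)
    set m := (∑ i ∈ s, b i) / #s
    have hm : 0 ≤ m := div_nonneg (sum_nonneg hbs) (Nat.cast_nonneg _)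
    rw [sum_prod_erase_insert ha, sum_insert ha, card_insert_of_notMem ha, ← card_mul_mean s b,
      Nat.add_sub_cancel]
    set x := (b a + #s * m) / ↑(#s + 1)
    have htangent := pow_add_mul_sub_le_pow hm (x := x)
      (by have := hb a (mem_insert_self a s); positivity) #s
    calc ∏ j ∈ s, b j + b a * ∑ k ∈ s, ∏ j ∈ s.erase k, b j
        ≤ m ^ #s + b a * (#s * m ^ (#s - 1)) := by
          gcongr
          exacts [prod_le_mean_pow s hbs, hb a (mem_insert_self a s), ih hbs]
      _ = (#s + 1 : ℕ) * (m ^ #s + #s * m ^ (#s - 1) * (x - m)) := by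
        have hpow : (#s : ℝ) * m ^ (#s - 1) * m = #s * m ^ #s := by
          rcases Nat.eq_zero_or_pos #s with h | h
          · simp [h]
          · rw [mul_assoc, ← pow_succ, Nat.sub_add_cancel h]
        simp only [x]
        push_cast
        field_simp
        linear_combination hpow
      _ ≤ (#s + 1 : ℕ) * x ^ #s := mul_le_mul_of_nonneg_left htangent (Nat.cast_nonneg _)

theorem prod_add_sub_prod_le (s : Finset ι) {c : ι → ℝ} {t : ℝ} (hc : ∀ i ∈ s, 0 ≤ c i)
    (ht : 0 ≤ t) :
    ∏ i ∈ s, (c i + t) - ∏ i ∈ s, c i ≤ t * ∑ k ∈ s, ∏ j ∈ s.erase k, (c j + t) := by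
  induction s using Finset.induction_on with
  | empty => simp
  | insert a s ha ih =>
    have hcs : ∀ i ∈ s, 0 ≤ c i := fun i hi => hc i (mem_insert_of_mem hi)
    have hca := hc a (mem_insert_self a s)
    have hprod : ∏ i ∈ s, c i ≤ ∏ i ∈ s, (c i + t) :=
      prod_le_prod hcs fun i _ => le_add_of_nonneg_right ht
    rw [sum_prod_erase_insert ha, prod_insert ha, prod_insert ha]
    linarith [mul_le_mul_of_nonneg_left (ih hcs) (add_nonneg hca ht),
      mul_le_mul_of_nonneg_left hprod ht]

end Maclaurin

section Frobenius

attribute [local instance] Matrix.frobeniusNormedAddCommGroup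

theorem frob_eq_norm {n m : ℕ} (M : Matrix (Fin n) (Fin m) ℝ) : frob M = ‖M‖ := by
  simp [frob, Matrix.frobenius_norm_def, Real.sqrt_eq_rpow]

theorem frob_nonneg {n m : ℕ} (M : Matrix (Fin n) (Fin m) ℝ) : 0 ≤ frob M :=
  Real.sqrt_nonneg _

theorem frob_le_frob_add_frob_sub {n m : ℕ} (M N : Matrix (Fin n) (Fin m) ℝ) :
    frob M ≤ frob N + frob (M - N) := by
  simpa only [frob_eq_norm] using norm_le_insert' M N

theorem norm_toLp_mulVec_le {n m : ℕ} (M : Matrix (Fin n) (Fin m) ℝ)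
    (v : EuclideanSpace ℝ (Fin m)) : ‖WithLp.toLp 2 (M.mulVec v.ofLp)‖ ≤ frob M * ‖v‖ := by
  rw [frob_eq_norm, ← Matrix.frobenius_norm_replicateCol (ι := Unit),
    ← Matrix.frobenius_norm_replicateCol (ι := Unit) v.ofLp, Matrix.replicateCol_mulVec]
  exact Matrix.frobenius_norm_mul _ _

end Frobenius

theorem EuclideanSpace.norm_le_norm_of_abs_le {ι : Type*} [Fintype ι] {u v : EuclideanSpace ℝ ι}
    (huv : ∀ i, |u i| ≤ |v i|) : ‖u‖ ≤ ‖v‖ := by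
  simp_rw [EuclideanSpace.norm_eq, Real.norm_eq_abs]
  exact Real.sqrt_le_sqrt (sum_le_sum fun i _ => pow_le_pow_left₀ (abs_nonneg _) (huv i) 2)

noncomputable def relu {ι : Type*} (v : EuclideanSpace ℝ ι) : EuclideanSpace ℝ ι :=
  WithLp.toLp 2 fun i => max (v i) 0

theorem norm_relu_sub_relu_le {ι : Type*} [Fintype ι] (u v : EuclideanSpace ℝ ι) :
    ‖relu u - relu v‖ ≤ ‖u - v‖ :=
  EuclideanSpace.norm_le_norm_of_abs_le fun i => by
    simpa [relu] using abs_max_sub_max_le_abs (u i) (v i) 0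

theorem norm_relu_le {ι : Type*} [Fintype ι] (v : EuclideanSpace ℝ ι) : ‖relu v‖ ≤ ‖v‖ := by
  have hrelu0 : relu (0 : EuclideanSpace ℝ ι) = 0 := by ext; simp [relu]
  simpa [hrelu0] using norm_relu_sub_relu_le v 0

noncomputable def layerIn (h : ℕ → ℕ) (W : ∀ l : ℕ, Matrix (Fin (h (l + 1))) (Fin (h l)) ℝ) :
    (l : ℕ) → EuclideanSpace ℝ (Fin (h 0)) → EuclideanSpace ℝ (Fin (h l))
  | 0, x => x
  | l + 1, x => relu (layerOut h W (l + 1) x)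

section Network

variable {h : ℕ → ℕ} (W W' : ∀ l : ℕ, Matrix (Fin (h (l + 1))) (Fin (h l)) ℝ)
  (x : EuclideanSpace ℝ (Fin (h 0)))

theorem layerOut_succ (l : ℕ) :
    layerOut h W (l + 1) x = WithLp.toLp 2 ((W l).mulVec (layerIn h W l x).ofLp) := by
  cases l <;> rfl

theorem norm_layerIn_le (l : ℕ) : ‖layerIn h W l x‖ ≤ ‖layerOut h W l x‖ := by
  cases l
  exacts [le_rfl, norm_relu_le _]

theorem norm_layerIn_sub_layerIn_le (l : ℕ) :
    ‖layerIn h W' l x - layerIn h W l x‖ ≤ ‖layerOut h W' l x - layerOut h W l x‖ := by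
  cases l
  exacts [le_rfl, norm_relu_sub_relu_le _ _]

theorem norm_layerOut_le (l : ℕ) : ‖layerOut h W l x‖ ≤ (∏ j ∈ range l, frob (W j)) * ‖x‖ := by
  induction l with
  | zero => simp [layerOut]
  | succ l ih =>
    rw [layerOut_succ, prod_range_succ, mul_comm _ (frob (W l)), mul_assoc]
    exact (norm_toLp_mulVec_le _ _).trans
      (mul_le_mul_of_nonneg_left ((norm_layerIn_le W x l).trans ih) (frob_nonneg _))

theorem norm_layerOut_sub_layerOut_le (l : ℕ) :
    ‖layerOut h W' l x - layerOut h W l x‖ ≤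
      (∏ j ∈ range l, (frob (W j) + frob (W' j - W j)) - ∏ j ∈ range l, frob (W j)) * ‖x‖ := by
  induction l with
  | zero => simp [layerOut]
  | succ l ih =>
    have hsplit : layerOut h W' (l + 1) x - layerOut h W (l + 1) x =
        WithLp.toLp 2 ((W' l).mulVec (layerIn h W' l x - layerIn h W l x).ofLp) +
          WithLp.toLp 2 ((W' l - W l).mulVec (layerIn h W l x).ofLp) := by
      rw [layerOut_succ, layerOut_succ, ← WithLp.toLp_sub, ← WithLp.toLp_add, WithLp.ofLp_sub,
        Matrix.mulVec_sub, Matrix.sub_mulVec]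
      congr 1
      abel
    have hW' := frob_le_frob_add_frob_sub (W' l) (W l)
    calc ‖layerOut h W' (l + 1) x - layerOut h W (l + 1) x‖
        ≤ frob (W' l) * ‖layerIn h W' l x - layerIn h W l x‖ +
            frob (W' l - W l) * ‖layerIn h W l x‖ := by
          rw [hsplit]
          exact (norm_add_le _ _).trans
            (add_le_add (norm_toLp_mulVec_le _ _) (norm_toLp_mulVec_le _ _))
      _ ≤ (frob (W l) + frob (W' l - W l)) *
            ((∏ j ∈ range l, (frob (W j) + frob (W' j - W j)) - ∏ j ∈ range l, frob (W j)) * ‖x‖) +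
          frob (W' l - W l) * ((∏ j ∈ range l, frob (W j)) * ‖x‖) := by
          gcongr
          · exact add_nonneg (frob_nonneg _) (frob_nonneg _)
          · exact (norm_layerIn_sub_layerIn_le W W' x l).trans ih
          · exact frob_nonneg _
          · exact (norm_layerIn_le W x l).trans (norm_layerOut_le W x l)
      _ = _ := by rw [prod_range_succ, prod_range_succ]; ring

end Network

theorem sum_le_sqrt_card_mul_sqrt_sum_sq {ι : Type*} (s : Finset ι) (f : ι → ℝ) :
    ∑ i ∈ s, f i ≤ √(#s : ℝ) * √(∑ i ∈ s, f i ^ 2) := by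
  rw [← Real.sqrt_mul (Nat.cast_nonneg _)]
  exact (le_abs_self _).trans (Real.abs_le_sqrt sq_sum_le_card_mul_sum_sq)

theorem mean_add_le_two_mul_div_sqrt_card {ι : Type*} {s : Finset ι} (hs : s.Nonempty)
    {c : ι → ℝ} {t R : ℝ} (hR : √(∑ i ∈ s, c i ^ 2) ≤ R) (ht : t ≤ R / √(#s : ℝ)) :
    (∑ i ∈ s, (c i + t)) / #s ≤ 2 * R / √(#s : ℝ) := by
  have hn : (0 : ℝ) < #s := by exact_mod_cast hs.card_pos
  have hsqrt : 0 < √(#s : ℝ) := Real.sqrt_pos.2 hn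
  have hsum : ∑ i ∈ s, c i ≤ √(#s : ℝ) * R :=
    (sum_le_sqrt_card_mul_sqrt_sum_sq s c).trans (mul_le_mul_of_nonneg_left hR hsqrt.le)
  have hsqrt_sq : √(#s : ℝ) * R * √(#s : ℝ) = #s * R := by
    rw [mul_right_comm, Real.mul_self_sqrt hn.le]
  rw [le_div_iff₀ hsqrt] at ht
  rw [le_div_iff₀ hsqrt, div_mul_eq_mul_div, div_le_iff₀ hn, sum_add_distrib, sum_const,
    nsmul_eq_mul]
  linarith [mul_le_mul_of_nonneg_right hsum hsqrt.le, mul_le_mul_of_nonneg_left ht hn.le]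

theorem network_perturbation_bound_uniform
    (L : ℕ) (hL : 1 ≤ L) (h : ℕ → ℕ)
    (W W' : ∀ l : ℕ, Matrix (Fin (h (l + 1))) (Fin (h l)) ℝ)
    (υ R B : ℝ)
    (hW : ∀ l < L, frob (W' l - W l) ≤ υ)
    (hυ : υ ≤ R / Real.sqrt L)
    (hR : Real.sqrt (∑ l ∈ Finset.range L, frob (W l) ^ 2) ≤ R)
    (x : EuclideanSpace ℝ (Fin (h 0))) (hx : ‖x‖ ≤ B) :
    ‖layerOut h W' L x - layerOut h W L x‖ ≤
      B * L * (2 * R / Real.sqrt L) ^ (L - 1) * υ := by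
  have hυ0 : 0 ≤ υ := (frob_nonneg _).trans (hW 0 hL)
  have hR0 : 0 ≤ R := (Real.sqrt_nonneg _).trans hR
  have hc : ∀ j ∈ range L, 0 ≤ frob (W j) := fun j _ => frob_nonneg _
  have hmean : (∑ j ∈ range L, (frob (W j) + υ)) / L ≤ 2 * R / √L := by
    simpa using mean_add_le_two_mul_div_sqrt_card (nonempty_range_iff.2 (by omega)) hR
      (by simpa using hυ)
  calc ‖layerOut h W' L x - layerOut h W L x‖
      ≤ (∏ j ∈ range L, (frob (W j) + frob (W' j - W j)) - ∏ j ∈ range L, frob (W j)) * ‖x‖ :=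
        norm_layerOut_sub_layerOut_le W W' x L
    _ ≤ (∏ j ∈ range L, (frob (W j) + υ) - ∏ j ∈ range L, frob (W j)) * ‖x‖ := by
        gcongr with j hj
        · exact fun j _ => add_nonneg (frob_nonneg _) (frob_nonneg _)
        · exact hW j (mem_range.1 hj)
    _ ≤ υ * (∑ k ∈ range L, ∏ j ∈ (range L).erase k, (frob (W j) + υ)) * ‖x‖ :=
        mul_le_mul_of_nonneg_right (prod_add_sub_prod_le _ hc hυ0) (norm_nonneg _)
    _ ≤ υ * (L * ((∑ j ∈ range L, (frob (W j) + υ)) / L) ^ (L - 1)) * ‖x‖ := by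
        gcongr
        simpa using sum_prod_erase_le_card_mul_mean_pow (range L)
          fun j hj => add_nonneg (hc j hj) hυ0
    _ ≤ υ * (L * (2 * R / √L) ^ (L - 1)) * B := by
        gcongr
        exact div_nonneg (sum_nonneg fun j hj => add_nonneg (hc j hj) hυ0) (Nat.cast_nonneg _)
    _ = B * L * (2 * R / Real.sqrt L) ^ (L - 1) * υ := by ring
end

section
/- Define g(κ) = ε^{1−κ}·exp((3/2)·h_b(κ)) for ε ∈ (0,1) and κ ∈ [0,1], where h_b is binary entropy in nats. Then g attains its maximum over [0,1] at κ* = 1/(1 + ε^{2/3}), with g(κ*) = (1 + ε^{2/3})^{3/2} > 1; moreover g is increasing on [0, κ*], hence ρ_ε(κ) := min(g(κ), 1) is nondecreasing in κ on [0,1]. -/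
/-!
With `a = ε^{2/3}` we have `log g(κ) = (3/2) φ_a(κ)`, where
`φ_a(κ) = (1 - κ) log a + h_b(κ)` is `tiltedBinEntropy a κ`.
Its derivative `log (1 - κ) - log (κ a)` is positive exactly when `κ < 1/(1 + a) = κ*`, so `φ_a`
rises up to `κ*` and falls after it, from `φ_a(κ*) = log (1 + a)` (the Gibbs variational formula
for `log (1 + a)`) down to `φ_a(1) = 0`. Hence `g ≥ 1` on `[κ*, 1]`, and `min (g, 1)` is `g` before
`κ*` and `1` after it.
-/

open Real Set

/-- Binary entropy in nats, with the convention `h_b 0 = h_b 1 = 0`. -/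
noncomputable def binEnt (x : ℝ) : ℝ := -(x * Real.log x) - (1 - x) * Real.log (1 - x)

lemma binEnt_eq_binEntropy : binEnt = binEntropy := by
  funext x
  simp only [binEnt, binEntropy, log_inv, mul_neg]
  ring

lemma MonotoneOn.min_const_Icc {α β : Type*} [LinearOrder α] [LinearOrder β] {f : α → β}
    {a b c : α} {m : β} (hf : MonotoneOn f (Icc a b)) (hm : ∀ x ∈ Icc b c, m ≤ f x) :
    MonotoneOn (fun x => min (f x) m) (Icc a c) := by
  intro x hx y hy hxy
  rcases le_total y b with hyb | hby
  · exact min_le_min_right m (hf ⟨hx.1, hxy.trans hyb⟩ ⟨hy.1, hyb⟩ hxy)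
  · simp only [min_eq_right (hm y ⟨hby, hy.2⟩), min_le_right]

noncomputable def tiltedBinEntropy (a κ : ℝ) : ℝ := (1 - κ) * log a + binEntropy κ

section tiltedBinEntropy

variable {a : ℝ}

lemma continuous_tiltedBinEntropy (a : ℝ) : Continuous (tiltedBinEntropy a) :=
  ((continuous_const.sub continuous_id).mul continuous_const).add binEntropy_continuous

lemma hasDerivAt_tiltedBinEntropy {κ : ℝ} (h₀ : κ ≠ 0) (h₁ : κ ≠ 1) :
    HasDerivAt (tiltedBinEntropy a) (log (1 - κ) - log κ - log a) κ := by
  have hlin : HasDerivAt (fun κ : ℝ => (1 - κ) * log a) (-log a) κ := by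
    simpa using ((hasDerivAt_id κ).const_sub 1).mul_const (log a)
  exact (hlin.add (hasDerivAt_binEntropy h₀ h₁)).congr_deriv (by ring)

lemma deriv_tiltedBinEntropy (ha : 0 < a) {κ : ℝ} (h₀ : 0 < κ) (h₁ : κ < 1) :
    deriv (tiltedBinEntropy a) κ = log (1 - κ) - log (κ * a) := by
  rw [(hasDerivAt_tiltedBinEntropy h₀.ne' h₁.ne).deriv, log_mul h₀.ne' ha.ne']
  ring

lemma lt_inv_one_add_iff (ha : 0 < a) {κ : ℝ} : κ < (1 + a)⁻¹ ↔ κ * a < 1 - κ := by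
  rw [← one_div, lt_div_iff₀ (by linarith)]
  constructor <;> intro h <;> linarith

lemma inv_one_add_lt_iff (ha : 0 < a) {κ : ℝ} : (1 + a)⁻¹ < κ ↔ 1 - κ < κ * a := by
  rw [← one_div, div_lt_iff₀ (by linarith)]
  constructor <;> intro h <;> linarith

lemma tiltedBinEntropy_strictMonoOn (ha : 0 < a) :
    StrictMonoOn (tiltedBinEntropy a) (Icc 0 (1 + a)⁻¹) := by
  refine strictMonoOn_of_deriv_pos (convex_Icc _ _)
    (continuous_tiltedBinEntropy a).continuousOn ?_
  rw [interior_Icc]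
  rintro κ ⟨h₀, h⟩
  have h₁ : κ < 1 := h.trans (inv_lt_one_of_one_lt₀ (by linarith))
  rw [deriv_tiltedBinEntropy ha h₀ h₁, sub_pos]
  exact log_lt_log (by positivity) ((lt_inv_one_add_iff ha).1 h)

lemma tiltedBinEntropy_strictAntiOn (ha : 0 < a) :
    StrictAntiOn (tiltedBinEntropy a) (Icc (1 + a)⁻¹ 1) := by
  refine strictAntiOn_of_deriv_neg (convex_Icc _ _)
    (continuous_tiltedBinEntropy a).continuousOn ?_
  rw [interior_Icc]
  rintro κ ⟨h, h₁⟩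
  have h₀ : 0 < κ := lt_trans (by positivity) h
  rw [deriv_tiltedBinEntropy ha h₀ h₁, sub_neg]
  exact log_lt_log (by linarith) ((inv_one_add_lt_iff ha).1 h)

lemma tiltedBinEntropy_inv_one_add (ha : 0 < a) : tiltedBinEntropy a (1 + a)⁻¹ = log (1 + a) := by
  have h1a : (0 : ℝ) < 1 + a := by linarith
  have hcompl : 1 - (1 + a)⁻¹ = a / (1 + a) := by field_simp; ring
  simp only [tiltedBinEntropy, binEntropy, inv_inv, hcompl, inv_div,
    log_div h1a.ne' ha.ne']
  field_simp
  ring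

lemma tiltedBinEntropy_one (a : ℝ) : tiltedBinEntropy a 1 = 0 := by
  simp [tiltedBinEntropy]

end tiltedBinEntropy

theorem rho_eps_monotone (ε : ℝ) (hε : ε ∈ Set.Ioo (0 : ℝ) 1)
    (g : ℝ → ℝ) (hg : ∀ κ, g κ = ε ^ (1 - κ) * Real.exp ((3 / 2) * binEnt κ))
    (κstar : ℝ) (hκstar : κstar = 1 / (1 + ε ^ ((2 : ℝ) / 3))) :
    (∀ κ ∈ Set.Icc (0 : ℝ) 1, g κ ≤ g κstar) ∧
    g κstar = (1 + ε ^ ((2 : ℝ) / 3)) ^ ((3 : ℝ) / 2) ∧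
    1 < g κstar ∧
    MonotoneOn g (Set.Icc 0 κstar) ∧
    MonotoneOn (fun κ => min (g κ) 1) (Set.Icc (0 : ℝ) 1) := by
  obtain ⟨hε₀, -⟩ := hε
  set a := ε ^ ((2 : ℝ) / 3)
  have ha₀ : 0 < a := by positivity
  rw [one_div] at hκstar
  subst hκstar
  have hg' : g = (fun t => exp (3 / 2 * t)) ∘ tiltedBinEntropy a := by
    funext κ
    have hlog : log ε = 3 / 2 * log a := by rw [log_rpow hε₀]; ring
    rw [hg, binEnt_eq_binEntropy, rpow_def_of_pos hε₀, ← exp_add, hlog]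
    simp only [Function.comp, tiltedBinEntropy]
    ring_nf
  have hexp : StrictMono fun t : ℝ => exp (3 / 2 * t) :=
    exp_strictMono.comp (strictMono_mul_left_of_pos (by norm_num))
  have hmono : MonotoneOn g (Icc 0 (1 + a)⁻¹) := by
    rw [hg']; exact hexp.monotone.comp_monotoneOn (tiltedBinEntropy_strictMonoOn ha₀).monotoneOn
  have hanti : AntitoneOn g (Icc (1 + a)⁻¹ 1) := by
    rw [hg']; exact hexp.monotone.comp_antitoneOn (tiltedBinEntropy_strictAntiOn ha₀).antitoneOn
  have hval : g (1 + a)⁻¹ = (1 + a) ^ ((3 : ℝ) / 2) := by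
    rw [hg', Function.comp_apply, tiltedBinEntropy_inv_one_add ha₀,
      rpow_def_of_pos (by linarith), mul_comm]
  have hg₁ : g 1 = 1 := by simp [hg', tiltedBinEntropy_one]
  have hκ₁ : (1 + a)⁻¹ ≤ 1 := inv_le_one_of_one_le₀ (by linarith)
  refine ⟨isMaxOn_Icc_of_mono_anti hmono hanti, hval, ?_, hmono, ?_⟩
  · rw [hval]
    exact one_lt_rpow (by linarith) (by norm_num)
  · refine hmono.min_const_Icc fun κ hκ => ?_
    exact hg₁ ▸ hanti hκ ⟨hκ₁, le_rfl⟩ hκ.2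
end
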